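/- Let Q be a unital quantale, M a Q-module, and I a Q-ideal of M. Define v θ_I w iff i^v = i^w, where i^v = ⋁{a ∈ Q | a∗v ∈ I}. Then θ_I is a Q-module congruence on M, the θ_I-class of ⊥ is exactly I, and θ_I is the largest Q-module congruence θ with ⊥/θ = I. -/
import Mathlib


/-- A (left) module over a unital quantale `Q`. -/
class QuantaleModule (Q M : Type*) [Monoid Q] [CompleteLattice Q]
    [CompleteLattice M] extends SMul Q M where
  mul_smul : ∀ (a b : Q) (v : M), (a * b) • v = a • b • v
  smul_sSup : ∀ (a : Q) (S : Set M), a • sSup S = ⨆ v ∈ S, a • v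
  sSup_smul : ∀ (S : Set Q) (v : M), sSup S • v = ⨆ a ∈ S, a • v
  one_smul : ∀ v : M, (1 : Q) • v = v

/-- A `Q`-ideal of a `Q`-module `M`: closed under arbitrary joins, downward closed,
and closed under scalar multiplication. -/
def IsIdeal (Q : Type*) {M : Type*} [Monoid Q] [CompleteLattice Q] [CompleteLattice M]
    [QuantaleModule Q M] (I : Set M) : Prop :=
  (∀ S ⊆ I, sSup S ∈ I) ∧ (∀ v ∈ I, ∀ w, w ≤ v → w ∈ I) ∧ (∀ v ∈ I, ∀ a : Q, a • v ∈ I)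

/-- A `Q`-module congruence on `M`: an equivalence relation compatible with
arbitrary joins and with the scalar action. -/
def IsCongr (Q : Type*) {M : Type v} [Monoid Q] [CompleteLattice Q] [CompleteLattice M]
    [QuantaleModule Q M] (r : M → M → Prop) : Prop :=
  Equivalence r ∧
  (∀ {ι : Type v} (f g : ι → M), (∀ i, r (f i) (g i)) → r (⨆ i, f i) (⨆ i, g i)) ∧
  (∀ (a : Q) (v w : M), r v w → r (a • v) (a • w))

/-- `i^v = ⨆ {a : Q | a • v ∈ I}`. -/
def iv (Q : Type*) {M : Type*} [Monoid Q] [CompleteLattice Q] [CompleteLattice M]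
    [QuantaleModule Q M] (I : Set M) (v : M) : Q := sSup {a : Q | a • v ∈ I}

section Helpers

variable {Q : Type*} {M : Type*} [Monoid Q] [CompleteLattice Q] [CompleteLattice M]
  [QuantaleModule Q M] {I : Set M}

lemma qsmul_mono {a b : Q} (h : a ≤ b) (v : M) : a • v ≤ b • v := by
  have hs : sSup ({a, b} : Set Q) = b := by
    simp [sSup_pair, sup_eq_right.mpr h]
  have := QuantaleModule.sSup_smul ({a, b} : Set Q) v
  rw [hs] at this
  rw [this]
  exact le_biSup (fun c => c • v) (Set.mem_insert a {b})

lemma qsmul_bot (a : Q) : a • (⊥ : M) = ⊥ := by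
  rw [show (⊥ : M) = sSup ∅ from sSup_empty.symm, QuantaleModule.smul_sSup]
  simp

lemma iv_smul_mem (hI : IsIdeal Q I) (v : M) : iv Q I v • v ∈ I := by
  rw [iv, QuantaleModule.sSup_smul, ← sSup_image]
  exact hI.1 _ (by rintro x ⟨a, ha, rfl⟩; exact ha)

lemma mem_iff_le_iv (hI : IsIdeal Q I) {a : Q} {v : M} : a • v ∈ I ↔ a ≤ iv Q I v := by
  constructor
  · exact fun h => le_sSup h
  · intro h
    exact hI.2.1 _ (iv_smul_mem hI v) _ (qsmul_mono h v)

lemma smul_iSup_mem_iff (hI : IsIdeal Q I) {ι : Type*} (a : Q) (f : ι → M) :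
    a • (⨆ i, f i) ∈ I ↔ ∀ i, a • f i ∈ I := by
  have h1 : a • (⨆ i, f i) = ⨆ i, a • f i := by
    rw [iSup, QuantaleModule.smul_sSup, iSup_range]
  rw [h1]
  constructor
  · intro h i
    exact hI.2.1 _ h _ (le_iSup (fun i => a • f i) i)
  · intro h
    rw [← sSup_range]
    exact hI.1 _ (by rintro x ⟨i, rfl⟩; exact h i)

end Helpers

/-- **Theorem.** For a `Q`-ideal `I` of `M`, the relation `v θ_I w ⟺ i^v = i^w` is a
`Q`-module congruence, the `θ_I`-class of `⊥` is exactly `I`, and `θ_I` is the largest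
congruence whose `⊥`-class is `I`. -/
theorem theta_I_congruence (Q : Type*) {M : Type v} [Monoid Q] [CompleteLattice Q] [IsQuantale Q]
    [CompleteLattice M] [QuantaleModule Q M] (I : Set M) (hI : IsIdeal Q I) :
    IsCongr Q (fun v w : M => iv Q I v = iv Q I w) ∧
    {v : M | iv Q I v = iv Q I (⊥ : M)} = I ∧
    (∀ θ : M → M → Prop, IsCongr Q θ → {v : M | θ v ⊥} = I →
      ∀ v w : M, θ v w → iv Q I v = iv Q I w) := by
  have hmem := fun {a : Q} {v : M} => mem_iff_le_iv (Q := Q) hI (a := a) (v := v)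
  have hbotI : (⊥ : M) ∈ I := by
    have := hI.1 ∅ (Set.empty_subset I)
    simpa using this
  have hivbot : iv Q I (⊥ : M) = ⊤ := by
    apply top_le_iff.mp
    apply le_sSup
    show (⊤ : Q) • (⊥ : M) ∈ I
    rw [qsmul_bot]
    exact hbotI
  have hclassI : {v : M | iv Q I v = iv Q I (⊥ : M)} = I := by
    ext v
    simp only [Set.mem_setOf_eq, hivbot]
    constructor
    · intro h
      have h1 : (⊤ : Q) • v ∈ I := hmem.mpr (by rw [h])
      have : v = (1 : Q) • v := (QuantaleModule.one_smul v).symm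
      rw [this]
      exact hI.2.1 _ h1 _ (qsmul_mono le_top v)
    · intro h
      apply top_le_iff.mp
      exact le_sSup (hI.2.2 _ h ⊤)
  refine ⟨⟨⟨fun _ => rfl, fun h => h.symm, fun h1 h2 => h1.trans h2⟩, ?_, ?_⟩, hclassI, ?_⟩
  · intro ι f g h
    have key : ∀ f g : ι → M, (∀ i, iv Q I (f i) = iv Q I (g i)) →
        iv Q I (⨆ i, f i) ≤ iv Q I (⨆ i, g i) := by
      intro f g h
      apply sSup_le
      intro a ha
      apply le_sSup
      show a • (⨆ i, g i) ∈ I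
      rw [smul_iSup_mem_iff hI]
      intro i
      have := (smul_iSup_mem_iff hI a f).mp ha i
      exact hmem.mpr ((h i) ▸ hmem.mp this)
    exact le_antisymm (key f g h) (key g f fun i => (h i).symm)
  · intro a v w h
    have key : ∀ v w : M, iv Q I v = iv Q I w → iv Q I (a • v) ≤ iv Q I (a • w) := by
      intro v w h
      apply sSup_le
      intro b hb
      apply le_sSup
      show b • (a • w) ∈ I
      rw [← QuantaleModule.mul_smul]
      have : (b * a) • v ∈ I := by
        rw [QuantaleModule.mul_smul]; exact hb
      exact hmem.mpr (h ▸ hmem.mp this)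
    exact le_antisymm (key v w h) (key w v h.symm)
  · intro θ hθ hcl v w h
    have key : ∀ v w : M, θ v w → iv Q I v ≤ iv Q I w := by
      intro v w h
      apply sSup_le
      intro a ha
      apply le_sSup
      show a • w ∈ I
      have h1 : θ (a • v) (a • w) := hθ.2.2 a v w h
      have h2 : θ (a • v) ⊥ := (Set.ext_iff.mp hcl (a • v)).mpr ha
      have h3 : θ (a • w) ⊥ := hθ.1.trans (hθ.1.symm h1) h2
      exact (Set.ext_iff.mp hcl (a • w)).mp h3
    exact le_antisymm (key v w h) (key w v (hθ.1.symm h))
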